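/- arXiv:solv-int/9702006 — 3 statements merged into one kernel-verified Lean document; each statement's English description precedes it below -/
import Mathlib

section
/- The Hénon–Heiles type system with four degrees of freedom is quasi-biHamiltonian with integrating factor ρ = −q4² and second function F = −H4: equivalently, the identity q4² · P0 ∇H1(x) = P1(x) ∇H4(x) holds for every x = (q1,q2,q3,q4,p1,p2,p3,p4) ∈ ℝ⁸. -/
/- STATEMENT 11: The 4-dof Hénon–Heiles type system is quasi-biHamiltonian with
ρ = −q4², F = −H4; equivalently q4² · P0 ∇H1(x) = P1(x) ∇H4(x) on ℝ⁸. -/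

noncomputable section

open Matrix

/-- partial derivative of `f` at `x` in the `i`-th coordinate direction,
coordinates ordered as `(q1,q2,q3,q4,p1,p2,p3,p4)`. -/
def pd (i : Fin 8) (f : (Fin 8 → ℝ) → ℝ) (x : Fin 8 → ℝ) : ℝ :=
  fderiv ℝ f x (Pi.single i 1)

/-- the gradient of `f` at `x`. -/
def grad (f : (Fin 8 → ℝ) → ℝ) (x : Fin 8 → ℝ) : Fin 8 → ℝ :=
  fun i => pd i f x

/-- the canonical matrix `P0 = [[0, I],[−I, 0]]`. -/
def P0 : Matrix (Fin 8) (Fin 8) ℝ :=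
  !![0, 0, 0, 0, 1, 0, 0, 0;
     0, 0, 0, 0, 0, 1, 0, 0;
     0, 0, 0, 0, 0, 0, 1, 0;
     0, 0, 0, 0, 0, 0, 0, 1;
     -1, 0, 0, 0, 0, 0, 0, 0;
     0, -1, 0, 0, 0, 0, 0, 0;
     0, 0, -1, 0, 0, 0, 0, 0;
     0, 0, 0, -1, 0, 0, 0, 0]

/-- The matrix `P1 = [[0, A],[−Aᵀ, B]]` with
`A = −[[q1,−1,0,0],[q2,0,−1,0],[2q3,q2,q1,q4],[q4,0,0,0]]` and
`B = [[0,−p2,−p3,−p4],[p2,0,0,0],[p3,0,0,0],[p4,0,0,0]]`. -/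
def P1 (x : Fin 8 → ℝ) : Matrix (Fin 8) (Fin 8) ℝ :=
  !![0, 0, 0, 0, -(x 0), 1, 0, 0;
     0, 0, 0, 0, -(x 1), 0, 1, 0;
     0, 0, 0, 0, -(2 * x 2), -(x 1), -(x 0), -(x 3);
     0, 0, 0, 0, -(x 3), 0, 0, 0;
     x 0, x 1, 2 * x 2, x 3, 0, -(x 5), -(x 6), -(x 7);
     -1, 0, x 1, 0, x 5, 0, 0, 0;
     0, -1, x 0, 0, x 6, 0, 0, 0;
     0, 0, x 3, 0, x 7, 0, 0, 0]

def H1 (x : Fin 8 → ℝ) : ℝ :=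
  (1/2) * ((x 7)^2 + 2 * x 4 * x 6 + (x 5)^2) + (3/4) * (x 0)^5
    - (5/2) * (x 0)^3 * x 1 + 2 * x 0 * (x 1)^2 + (5/2) * (x 0)^2 * x 2
    + (1/2) * x 0 * (x 3)^2 - x 1 * x 2

def H4 (x : Fin 8 → ℝ) : ℝ :=
  - x 5 * x 7 * x 0 * x 3 - x 6 * x 7 * x 1 * x 3 + x 5 * x 6 * (x 3)^2
    + (x 7)^2 * x 0 * x 1 + (x 7)^2 * x 2 - x 4 * x 7 * x 3
    - (5/8) * (x 0)^4 * (x 3)^2 + (3/2) * (x 0)^2 * x 1 * (x 3)^2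
    - (1/2) * (x 1)^2 * (x 3)^2 - x 0 * x 2 * (x 3)^2 - (1/8) * (x 3)^4

private lemma npow' {f : (Fin 8 → ℝ) → ℝ} {f' : (Fin 8 → ℝ) →L[ℝ] ℝ} {x : Fin 8 → ℝ}
    (n : ℕ) (h : HasFDerivAt f f' x) :
    HasFDerivAt (fun y => f y ^ n) (((n : ℝ) * f x ^ (n - 1)) • f') x :=
  (hasDerivAt_pow n (f x)).comp_hasFDerivAt x h

set_option maxHeartbeats 1000000 in
private lemma grad1 (x : Fin 8 → ℝ) : grad H1 x = ![(15/4)*(x 0)^4 - (15/2)*(x 0)^2*(x 1) + 2*(x 1)^2 + 5*(x 0)*(x 2) + (1/2)*(x 3)^2,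
      -(5/2)*(x 0)^3 + 4*(x 0)*(x 1) - x 2,
      (5/2)*(x 0)^2 - x 1,
      x 0 * x 3,
      x 6,
      x 5,
      x 4,
      x 7] := by
  have h : ∀ i : Fin 8, HasFDerivAt (fun y : Fin 8 → ℝ => y i)
      (ContinuousLinearMap.proj (R := ℝ) (φ := fun _ : Fin 8 => ℝ) i) x :=
    fun i => hasFDerivAt_apply i x
  have d1 : HasFDerivAt H1 _ x :=
    (((((((npow' 2 (h 7)).add (((h 4).const_mul 2).mul (h 6))).add
        (npow' 2 (h 5))).const_mul (1/2)).add
      ((npow' 5 (h 0)).const_mul (3/4))).sub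
      (((npow' 3 (h 0)).const_mul (5/2)).mul (h 1))).add
      (((h 0).const_mul 2).mul (npow' 2 (h 1)))).add
      (((npow' 2 (h 0)).const_mul (5/2)).mul (h 2)) |>.add
      (((h 0).const_mul (1/2)).mul (npow' 2 (h 3))) |>.sub ((h 1).mul (h 2))
  have a0 : grad H1 x 0 = (15/4)*(x 0)^4 - (15/2)*(x 0)^2*(x 1) + 2*(x 1)^2 + 5*(x 0)*(x 2) + (1/2)*(x 3)^2 := by
    simp only [grad, pd, d1.fderiv, ContinuousLinearMap.add_apply,
      ContinuousLinearMap.sub_apply, ContinuousLinearMap.neg_apply, ContinuousLinearMap.smul_apply,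
      ContinuousLinearMap.proj_apply, Pi.single_apply, smul_eq_mul, Fin.reduceEq, reduceIte,
      Nat.cast_ofNat, mul_zero, mul_one, zero_mul, one_mul, add_zero, zero_add, sub_zero, neg_zero]
    try norm_num
    try ring
  have a1 : grad H1 x 1 = -(5/2)*(x 0)^3 + 4*(x 0)*(x 1) - x 2 := by
    simp only [grad, pd, d1.fderiv, ContinuousLinearMap.add_apply,
      ContinuousLinearMap.sub_apply, ContinuousLinearMap.neg_apply, ContinuousLinearMap.smul_apply,
      ContinuousLinearMap.proj_apply, Pi.single_apply, smul_eq_mul, Fin.reduceEq, reduceIte,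
      Nat.cast_ofNat, mul_zero, mul_one, zero_mul, one_mul, add_zero, zero_add, sub_zero, neg_zero]
    try norm_num
    try ring
  have a2 : grad H1 x 2 = (5/2)*(x 0)^2 - x 1 := by
    simp only [grad, pd, d1.fderiv, ContinuousLinearMap.add_apply,
      ContinuousLinearMap.sub_apply, ContinuousLinearMap.neg_apply, ContinuousLinearMap.smul_apply,
      ContinuousLinearMap.proj_apply, Pi.single_apply, smul_eq_mul, Fin.reduceEq, reduceIte,
      Nat.cast_ofNat, mul_zero, mul_one, zero_mul, one_mul, add_zero, zero_add, sub_zero, neg_zero]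
    try norm_num
    try ring
  have a3 : grad H1 x 3 = x 0 * x 3 := by
    simp only [grad, pd, d1.fderiv, ContinuousLinearMap.add_apply,
      ContinuousLinearMap.sub_apply, ContinuousLinearMap.neg_apply, ContinuousLinearMap.smul_apply,
      ContinuousLinearMap.proj_apply, Pi.single_apply, smul_eq_mul, Fin.reduceEq, reduceIte,
      Nat.cast_ofNat, mul_zero, mul_one, zero_mul, one_mul, add_zero, zero_add, sub_zero, neg_zero]
    try norm_num
    try ring
  have a4 : grad H1 x 4 = x 6 := by
    simp only [grad, pd, d1.fderiv, ContinuousLinearMap.add_apply,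
      ContinuousLinearMap.sub_apply, ContinuousLinearMap.neg_apply, ContinuousLinearMap.smul_apply,
      ContinuousLinearMap.proj_apply, Pi.single_apply, smul_eq_mul, Fin.reduceEq, reduceIte,
      Nat.cast_ofNat, mul_zero, mul_one, zero_mul, one_mul, add_zero, zero_add, sub_zero, neg_zero]
    try norm_num
    try ring
  have a5 : grad H1 x 5 = x 5 := by
    simp only [grad, pd, d1.fderiv, ContinuousLinearMap.add_apply,
      ContinuousLinearMap.sub_apply, ContinuousLinearMap.neg_apply, ContinuousLinearMap.smul_apply,
      ContinuousLinearMap.proj_apply, Pi.single_apply, smul_eq_mul, Fin.reduceEq, reduceIte,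
      Nat.cast_ofNat, mul_zero, mul_one, zero_mul, one_mul, add_zero, zero_add, sub_zero, neg_zero]
    try norm_num
    try ring
  have a6 : grad H1 x 6 = x 4 := by
    simp only [grad, pd, d1.fderiv, ContinuousLinearMap.add_apply,
      ContinuousLinearMap.sub_apply, ContinuousLinearMap.neg_apply, ContinuousLinearMap.smul_apply,
      ContinuousLinearMap.proj_apply, Pi.single_apply, smul_eq_mul, Fin.reduceEq, reduceIte,
      Nat.cast_ofNat, mul_zero, mul_one, zero_mul, one_mul, add_zero, zero_add, sub_zero, neg_zero]
    try norm_num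
    try ring
  have a7 : grad H1 x 7 = x 7 := by
    simp only [grad, pd, d1.fderiv, ContinuousLinearMap.add_apply,
      ContinuousLinearMap.sub_apply, ContinuousLinearMap.neg_apply, ContinuousLinearMap.smul_apply,
      ContinuousLinearMap.proj_apply, Pi.single_apply, smul_eq_mul, Fin.reduceEq, reduceIte,
      Nat.cast_ofNat, mul_zero, mul_one, zero_mul, one_mul, add_zero, zero_add, sub_zero, neg_zero]
    try norm_num
    try ring
  funext i
  fin_cases i
  exacts [a0, a1, a2, a3, a4, a5, a6, a7]

set_option maxHeartbeats 1000000 in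
private lemma grad4 (x : Fin 8 → ℝ) : grad H4 x = ![-(x 5)*(x 7)*(x 3) + (x 7)^2*(x 1) - (5/2)*(x 0)^3*(x 3)^2 + 3*(x 0)*(x 1)*(x 3)^2 - (x 2)*(x 3)^2,
      -(x 6)*(x 7)*(x 3) + (x 7)^2*(x 0) + (3/2)*(x 0)^2*(x 3)^2 - (x 1)*(x 3)^2,
      (x 7)^2 - (x 0)*(x 3)^2,
      -(x 5)*(x 7)*(x 0) - (x 6)*(x 7)*(x 1) + 2*(x 5)*(x 6)*(x 3) - (x 4)*(x 7) - (5/4)*(x 0)^4*(x 3) + 3*(x 0)^2*(x 1)*(x 3) - (x 1)^2*(x 3) - 2*(x 0)*(x 2)*(x 3) - (1/2)*(x 3)^3,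
      -(x 7)*(x 3),
      -(x 7)*(x 0)*(x 3) + (x 6)*(x 3)^2,
      -(x 7)*(x 1)*(x 3) + (x 5)*(x 3)^2,
      -(x 5)*(x 0)*(x 3) - (x 6)*(x 1)*(x 3) + 2*(x 7)*(x 0)*(x 1) + 2*(x 7)*(x 2) - (x 4)*(x 3)] := by
  have h : ∀ i : Fin 8, HasFDerivAt (fun y : Fin 8 → ℝ => y i)
      (ContinuousLinearMap.proj (R := ℝ) (φ := fun _ : Fin 8 => ℝ) i) x :=
    fun i => hasFDerivAt_apply i x
  have d4 : HasFDerivAt H4 _ x :=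
    (((((h 5).neg.mul (h 7)).mul (h 0)).mul (h 3)).sub
      ((((h 6).mul (h 7)).mul (h 1)).mul (h 3))).add
      (((h 5).mul (h 6)).mul (npow' 2 (h 3))) |>.add
      (((npow' 2 (h 7)).mul (h 0)).mul (h 1)) |>.add
      ((npow' 2 (h 7)).mul (h 2)) |>.sub
      (((h 4).mul (h 7)).mul (h 3)) |>.sub
      (((npow' 4 (h 0)).const_mul (5/8)).mul (npow' 2 (h 3))) |>.add
      ((((npow' 2 (h 0)).const_mul (3/2)).mul (h 1)).mul (npow' 2 (h 3))) |>.sub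
      (((npow' 2 (h 1)).const_mul (1/2)).mul (npow' 2 (h 3))) |>.sub
      (((h 0).mul (h 2)).mul (npow' 2 (h 3))) |>.sub
      ((npow' 4 (h 3)).const_mul (1/8))
  have a0 : grad H4 x 0 = -(x 5)*(x 7)*(x 3) + (x 7)^2*(x 1) - (5/2)*(x 0)^3*(x 3)^2 + 3*(x 0)*(x 1)*(x 3)^2 - (x 2)*(x 3)^2 := by
    simp only [grad, pd, d4.fderiv, ContinuousLinearMap.add_apply,
      ContinuousLinearMap.sub_apply, ContinuousLinearMap.neg_apply, ContinuousLinearMap.smul_apply,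
      ContinuousLinearMap.proj_apply, Pi.single_apply, smul_eq_mul, Fin.reduceEq, reduceIte,
      Nat.cast_ofNat, mul_zero, mul_one, zero_mul, one_mul, add_zero, zero_add, sub_zero, neg_zero]
    try norm_num
    try ring
  have a1 : grad H4 x 1 = -(x 6)*(x 7)*(x 3) + (x 7)^2*(x 0) + (3/2)*(x 0)^2*(x 3)^2 - (x 1)*(x 3)^2 := by
    simp only [grad, pd, d4.fderiv, ContinuousLinearMap.add_apply,
      ContinuousLinearMap.sub_apply, ContinuousLinearMap.neg_apply, ContinuousLinearMap.smul_apply,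
      ContinuousLinearMap.proj_apply, Pi.single_apply, smul_eq_mul, Fin.reduceEq, reduceIte,
      Nat.cast_ofNat, mul_zero, mul_one, zero_mul, one_mul, add_zero, zero_add, sub_zero, neg_zero]
    try norm_num
    try ring
  have a2 : grad H4 x 2 = (x 7)^2 - (x 0)*(x 3)^2 := by
    simp only [grad, pd, d4.fderiv, ContinuousLinearMap.add_apply,
      ContinuousLinearMap.sub_apply, ContinuousLinearMap.neg_apply, ContinuousLinearMap.smul_apply,
      ContinuousLinearMap.proj_apply, Pi.single_apply, smul_eq_mul, Fin.reduceEq, reduceIte,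
      Nat.cast_ofNat, mul_zero, mul_one, zero_mul, one_mul, add_zero, zero_add, sub_zero, neg_zero]
    try norm_num
    try ring
  have a3 : grad H4 x 3 = -(x 5)*(x 7)*(x 0) - (x 6)*(x 7)*(x 1) + 2*(x 5)*(x 6)*(x 3) - (x 4)*(x 7) - (5/4)*(x 0)^4*(x 3) + 3*(x 0)^2*(x 1)*(x 3) - (x 1)^2*(x 3) - 2*(x 0)*(x 2)*(x 3) - (1/2)*(x 3)^3 := by
    simp only [grad, pd, d4.fderiv, ContinuousLinearMap.add_apply,
      ContinuousLinearMap.sub_apply, ContinuousLinearMap.neg_apply, ContinuousLinearMap.smul_apply,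
      ContinuousLinearMap.proj_apply, Pi.single_apply, smul_eq_mul, Fin.reduceEq, reduceIte,
      Nat.cast_ofNat, mul_zero, mul_one, zero_mul, one_mul, add_zero, zero_add, sub_zero, neg_zero]
    try norm_num
    try ring
  have a4 : grad H4 x 4 = -(x 7)*(x 3) := by
    simp only [grad, pd, d4.fderiv, ContinuousLinearMap.add_apply,
      ContinuousLinearMap.sub_apply, ContinuousLinearMap.neg_apply, ContinuousLinearMap.smul_apply,
      ContinuousLinearMap.proj_apply, Pi.single_apply, smul_eq_mul, Fin.reduceEq, reduceIte,
      Nat.cast_ofNat, mul_zero, mul_one, zero_mul, one_mul, add_zero, zero_add, sub_zero, neg_zero]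
    try norm_num
    try ring
  have a5 : grad H4 x 5 = -(x 7)*(x 0)*(x 3) + (x 6)*(x 3)^2 := by
    simp only [grad, pd, d4.fderiv, ContinuousLinearMap.add_apply,
      ContinuousLinearMap.sub_apply, ContinuousLinearMap.neg_apply, ContinuousLinearMap.smul_apply,
      ContinuousLinearMap.proj_apply, Pi.single_apply, smul_eq_mul, Fin.reduceEq, reduceIte,
      Nat.cast_ofNat, mul_zero, mul_one, zero_mul, one_mul, add_zero, zero_add, sub_zero, neg_zero]
    try norm_num
    try ring
  have a6 : grad H4 x 6 = -(x 7)*(x 1)*(x 3) + (x 5)*(x 3)^2 := by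
    simp only [grad, pd, d4.fderiv, ContinuousLinearMap.add_apply,
      ContinuousLinearMap.sub_apply, ContinuousLinearMap.neg_apply, ContinuousLinearMap.smul_apply,
      ContinuousLinearMap.proj_apply, Pi.single_apply, smul_eq_mul, Fin.reduceEq, reduceIte,
      Nat.cast_ofNat, mul_zero, mul_one, zero_mul, one_mul, add_zero, zero_add, sub_zero, neg_zero]
    try norm_num
    try ring
  have a7 : grad H4 x 7 = -(x 5)*(x 0)*(x 3) - (x 6)*(x 1)*(x 3) + 2*(x 7)*(x 0)*(x 1) + 2*(x 7)*(x 2) - (x 4)*(x 3) := by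
    simp only [grad, pd, d4.fderiv, ContinuousLinearMap.add_apply,
      ContinuousLinearMap.sub_apply, ContinuousLinearMap.neg_apply, ContinuousLinearMap.smul_apply,
      ContinuousLinearMap.proj_apply, Pi.single_apply, smul_eq_mul, Fin.reduceEq, reduceIte,
      Nat.cast_ofNat, mul_zero, mul_one, zero_mul, one_mul, add_zero, zero_add, sub_zero, neg_zero]
    try norm_num
    try ring
  funext i
  fin_cases i
  exacts [a0, a1, a2, a3, a4, a5, a6, a7]

set_option maxHeartbeats 1000000 in
theorem henon_heiles_4dof_quasi_biHamiltonian :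
    ∀ x : Fin 8 → ℝ,
      (x 3)^2 • P0.mulVec (grad H1 x) = (P1 x).mulVec (grad H4 x) := by
  intro x
  rw [grad1, grad4]
  simp only [P0, P1, Matrix.cons_mulVec, Matrix.cons_dotProduct, Matrix.dotProduct_of_isEmpty,
    Matrix.empty_mulVec, Matrix.head_cons, Matrix.tail_cons, Matrix.smul_cons,
    Matrix.smul_empty, smul_eq_mul]
  funext j
  fin_cases j <;> (try simp) <;> (try ring)

end
end

section
/- Separability of the general Pfaffian quasi-biHamiltonian Hamiltonian: for every n ≥ 2 and every choice of n smooth functions f_i : ℝ × ℝ → ℝ, the function H(λ,μ) = Σ_{k=1}^{n} f_k(λ_k, μ_k)/Δ_k satisfies the Levi-Civita separability conditions L_ij(H) = 0 for all i ≠ j at every point (λ,μ) with the λ_k pairwise distinct. -/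
/- STATEMENT 17: separability of the general Pfaffian quasi-biHamiltonian
Hamiltonian H(λ,μ) = Σ_k f_k(λ_k,μ_k)/Δ_k: the Levi-Civita conditions
L_ij(H) = 0 hold for all i ≠ j wherever the λ_k are pairwise distinct. -/

noncomputable section

open Finset

/-- `Δ_k(λ) = Π_{j ≠ k} (λ_k − λ_j)`. -/
def Delta {n : ℕ} (k : Fin n) (l : Fin n → ℝ) : ℝ :=
  ∏ j ∈ univ.erase k, (l k - l j)

/-- partial derivative in the direction of `λ_i`. -/
def Dl {n : ℕ} (i : Fin n) (H : (Fin n → ℝ) × (Fin n → ℝ) → ℝ) :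
    (Fin n → ℝ) × (Fin n → ℝ) → ℝ :=
  fun x => fderiv ℝ H x (Pi.single i 1, (0 : Fin n → ℝ))

/-- partial derivative in the direction of `μ_i`. -/
def Dm {n : ℕ} (i : Fin n) (H : (Fin n → ℝ) × (Fin n → ℝ) → ℝ) :
    (Fin n → ℝ) × (Fin n → ℝ) → ℝ :=
  fun x => fderiv ℝ H x ((0 : Fin n → ℝ), Pi.single i 1)

/-- the Levi-Civita expression
`L_ij(H) = H_{λ_i} H_{λ_j} H_{μ_i μ_j} + H_{μ_i} H_{μ_j} H_{λ_i λ_j}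
  − H_{λ_i} H_{μ_j} H_{μ_i λ_j} − H_{λ_j} H_{μ_i} H_{μ_j λ_i}`. -/
def LC {n : ℕ} (i j : Fin n) (H : (Fin n → ℝ) × (Fin n → ℝ) → ℝ)
    (x : (Fin n → ℝ) × (Fin n → ℝ)) : ℝ :=
  Dl i H x * Dl j H x * Dm i (Dm j H) x
    + Dm i H x * Dm j H x * Dl i (Dl j H) x
    - Dl i H x * Dm j H x * Dm i (Dl j H) x
    - Dl j H x * Dm i H x * Dm j (Dl i H) x

/-- `H(λ,μ) = Σ_k f_k(λ_k,μ_k)/Δ_k`. -/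
def Hgen {n : ℕ} (f : Fin n → ℝ × ℝ → ℝ) (x : (Fin n → ℝ) × (Fin n → ℝ)) : ℝ :=
  ∑ k, f k (x.1 k, x.2 k) / Delta k x.1

namespace PQBH
open ContinuousLinearMap Topology

variable {n : ℕ}

abbrev EE (n : ℕ) := (Fin n → ℝ) × (Fin n → ℝ)

def cl (k : Fin n) : EE n →L[ℝ] ℝ :=
  (ContinuousLinearMap.proj k).comp (ContinuousLinearMap.fst ℝ (Fin n → ℝ) (Fin n → ℝ))
def cm (k : Fin n) : EE n →L[ℝ] ℝ :=
  (ContinuousLinearMap.proj k).comp (ContinuousLinearMap.snd ℝ (Fin n → ℝ) (Fin n → ℝ))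
def pc (k : Fin n) : EE n →L[ℝ] ℝ × ℝ := (cl k).prod (cm k)

def vL (i : Fin n) : EE n := (Pi.single i 1, 0)
def vM (i : Fin n) : EE n := (0, Pi.single i 1)

def dd (a b : Fin n) : ℝ := if a = b then 1 else 0

@[simp] lemma cl_apply (k : Fin n) (x : EE n) : cl k x = x.1 k := rfl
@[simp] lemma cm_apply (k : Fin n) (x : EE n) : cm k x = x.2 k := rfl
@[simp] lemma vL_fst_apply (i k : Fin n) : (vL i).1 k = dd k i := by
  simp [vL, Pi.single_apply, dd]
@[simp] lemma vL_snd_apply (i k : Fin n) : (vL i).2 k = 0 := rfl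
@[simp] lemma vM_fst_apply (i k : Fin n) : (vM i).1 k = 0 := rfl
@[simp] lemma vM_snd_apply (i k : Fin n) : (vM i).2 k = dd k i := by
  simp [vM, Pi.single_apply, dd]

@[simp] lemma cl_vL (k i : Fin n) : cl k (vL i) = dd k i := by simp
@[simp] lemma cl_vM (k i : Fin n) : cl k (vM i) = 0 := rfl
@[simp] lemma cm_vL (k i : Fin n) : cm k (vL i) = 0 := rfl
@[simp] lemma cm_vM (k i : Fin n) : cm k (vM i) = dd k i := by
  simp [vM, Pi.single_apply, dd]

def R (k : Fin n) (x : EE n) : ℝ := ∏ r ∈ univ.erase k, (x.1 k - x.1 r)⁻¹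

def tt (k i : Fin n) (x : EE n) : ℝ :=
  ∑ r ∈ univ.erase k, (dd r i - dd k i) * (x.1 k - x.1 r)⁻¹

def DR (k : Fin n) (x : EE n) : EE n →L[ℝ] ℝ :=
  ∑ r ∈ univ.erase k,
    ((∏ r' ∈ (univ.erase k).erase r, (x.1 k - x.1 r')⁻¹) * (-(((x.1 k - x.1 r)) ^ 2)⁻¹)) •
      (cl k - cl r)

def Dtt (k i : Fin n) (x : EE n) : EE n →L[ℝ] ℝ :=
  ∑ r ∈ univ.erase k,
    ((dd r i - dd k i) * (-(((x.1 k - x.1 r)) ^ 2)⁻¹)) • (cl k - cl r)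

lemma hasFDerivAt_sub_coord (k r : Fin n) (x : EE n) :
    HasFDerivAt (fun y : EE n => y.1 k - y.1 r) (cl k - cl r) x :=
  (cl k).hasFDerivAt.sub (cl r).hasFDerivAt

lemma hasFDerivAt_inv_coord (k r : Fin n) {x : EE n} (h : x.1 k ≠ x.1 r) :
    HasFDerivAt (fun y : EE n => (y.1 k - y.1 r)⁻¹)
      ((-(((x.1 k - x.1 r)) ^ 2)⁻¹) • (cl k - cl r)) x :=
  (hasDerivAt_inv (sub_ne_zero.mpr h)).comp_hasFDerivAt x (hasFDerivAt_sub_coord k r x)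

lemma hasFDerivAt_R (k : Fin n) {x : EE n} (hx : ∀ a b : Fin n, a ≠ b → x.1 a ≠ x.1 b) :
    HasFDerivAt (R k) (DR k x) x := by
  have h := HasFDerivAt.finset_prod (u := univ.erase k)
    (g := fun r (y : EE n) => (y.1 k - y.1 r)⁻¹)
    (g' := fun r => (-(((x.1 k - x.1 r)) ^ 2)⁻¹) • (cl k - cl r)) (x := x)
    (fun r hr => hasFDerivAt_inv_coord k r (hx k r (Ne.symm (Finset.mem_erase.mp hr).1)))
  refine h.congr_fderiv ?_
  · rw [DR]
    refine Finset.sum_congr rfl fun r hr => ?_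
    rw [smul_smul]

lemma DR_vM (k i : Fin n) (x : EE n) : DR k x (vM i) = 0 := by
  simp [DR, ContinuousLinearMap.sum_apply]

lemma DR_vL (k i : Fin n) (x : EE n) : DR k x (vL i) = R k x * tt k i x := by
  rw [DR, tt, R, Finset.mul_sum, ContinuousLinearMap.sum_apply]
  refine Finset.sum_congr rfl fun r hr => ?_
  rw [← Finset.mul_prod_erase _ _ hr]
  simp only [ContinuousLinearMap.smul_apply, ContinuousLinearMap.sub_apply, cl_vL,
    smul_eq_mul, sq, mul_inv]
  ring

lemma Dtt_vM (k i j : Fin n) (x : EE n) : Dtt k j x (vM i) = 0 := by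
  simp [Dtt, ContinuousLinearMap.sum_apply]

lemma Dtt_vL (k i j : Fin n) (x : EE n) :
    Dtt k j x (vL i) =
      ∑ r ∈ univ.erase k, (dd r j - dd k j) * (-(((x.1 k - x.1 r)) ^ 2)⁻¹) * (dd k i - dd r i) := by
  rw [Dtt, ContinuousLinearMap.sum_apply]
  refine Finset.sum_congr rfl fun r hr => ?_
  simp only [ContinuousLinearMap.smul_apply, ContinuousLinearMap.sub_apply, cl_vL, smul_eq_mul]

lemma hasFDerivAt_tt (k i : Fin n) {x : EE n} (hx : ∀ a b : Fin n, a ≠ b → x.1 a ≠ x.1 b) :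
    HasFDerivAt (tt k i) (Dtt k i x) x := by
  have h : HasFDerivAt (fun y : EE n => ∑ r ∈ univ.erase k, (dd r i - dd k i) * (y.1 k - y.1 r)⁻¹)
      (∑ r ∈ univ.erase k, (dd r i - dd k i) • ((-(((x.1 k - x.1 r)) ^ 2)⁻¹) • (cl k - cl r))) x := by
    refine HasFDerivAt.fun_sum fun r hr => ?_
    exact (hasFDerivAt_inv_coord k r (hx k r (Ne.symm (Finset.mem_erase.mp hr).1))).const_mul _
  refine h.congr_fderiv ?_
  rw [Dtt]
  refine Finset.sum_congr rfl fun r hr => ?_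
  rw [smul_smul]


lemma tt_eq {k i : Fin n} (h : i ≠ k) (x : EE n) : tt k i x = (x.1 k - x.1 i)⁻¹ := by
  rw [tt, Finset.sum_eq_single i]
  · simp [dd, h, Ne.symm h]
  · intro b hb hbi
    have hbk := (Finset.mem_erase.mp hb).1
    simp [dd, hbi, Ne.symm h]
  · intro hi
    exact absurd (Finset.mem_erase.mpr ⟨h, Finset.mem_univ i⟩) hi

lemma star {x : EE n} (hx : ∀ a b : Fin n, a ≠ b → x.1 a ≠ x.1 b)
    {i j : Fin n} (hij : i ≠ j) (k : Fin n) :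
    tt k i x * tt k j x + Dtt k j x (vL i) = (tt k i x - tt k j x) * (x.1 i - x.1 j)⁻¹ := by
  rw [Dtt_vL]
  by_cases hki : k = i
  · subst hki
    have hsum : ∑ r ∈ univ.erase k, (dd r j - dd k j) * (-(((x.1 k - x.1 r)) ^ 2)⁻¹) * (dd k k - dd r k)
        = -(((x.1 k - x.1 j)) ^ 2)⁻¹ := by
      rw [Finset.sum_eq_single j]
      · simp [dd, Ne.symm hij, hij]
      · intro b hb hbj
        have hbk := (Finset.mem_erase.mp hb).1
        simp [dd, hbj, hij, hbk]
      · intro hj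
        exact absurd (Finset.mem_erase.mpr ⟨Ne.symm hij, Finset.mem_univ j⟩) hj
    rw [hsum, tt_eq (Ne.symm hij) x]
    rw [sq, mul_inv]
    ring
  · by_cases hkj : k = j
    · subst hkj
      have hsum : ∑ r ∈ univ.erase k, (dd r k - dd k k) * (-(((x.1 k - x.1 r)) ^ 2)⁻¹) * (dd k i - dd r i)
          = -(((x.1 k - x.1 i)) ^ 2)⁻¹ := by
        rw [Finset.sum_eq_single i]
        · simp [dd, hki, hij, Ne.symm hij]
        · intro b hb hbi
          have hbk := (Finset.mem_erase.mp hb).1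
          simp [dd, hbi, hbk, hki]
        · intro hi
          exact absurd (Finset.mem_erase.mpr ⟨Ne.symm hki, Finset.mem_univ i⟩) hi
      rw [hsum, tt_eq (Ne.symm hki) x]
      have h1 : (x.1 i - x.1 k)⁻¹ = -(x.1 k - x.1 i)⁻¹ := by
        rw [← neg_sub, inv_neg]
      rw [h1, sq, mul_inv]
      ring
    · have hsum : ∑ r ∈ univ.erase k, (dd r j - dd k j) * (-(((x.1 k - x.1 r)) ^ 2)⁻¹) * (dd k i - dd r i)
          = 0 := by
        refine Finset.sum_eq_zero fun r hr => ?_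
        by_cases hrj : r = j
        · subst hrj
          simp [dd, hki, Ne.symm hij, hkj]
        · simp [dd, hrj, hkj, hki]
      rw [hsum, tt_eq (fun h => hki h.symm) x, tt_eq (fun h => hkj h.symm) x]
      have ha : x.1 k - x.1 i ≠ 0 := sub_ne_zero.mpr (hx k i hki)
      have hb : x.1 k - x.1 j ≠ 0 := sub_ne_zero.mpr (hx k j hkj)
      have hc : x.1 i - x.1 j ≠ 0 := sub_ne_zero.mpr (hx i j hij)
      field_simp
      ring


variable (f : Fin n → ℝ × ℝ → ℝ)

def P (k : Fin n) (x : EE n) : ℝ := f k (x.1 k, x.2 k)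
def A (k : Fin n) (x : EE n) : ℝ := fderiv ℝ (f k) (x.1 k, x.2 k) (1, 0)
def B (k : Fin n) (x : EE n) : ℝ := fderiv ℝ (f k) (x.1 k, x.2 k) (0, 1)

def DP (k : Fin n) (x : EE n) : EE n →L[ℝ] ℝ :=
  (fderiv ℝ (f k) (x.1 k, x.2 k)).comp (pc k)

lemma pc_vL (k i : Fin n) : pc k (vL i) = ((dd k i : ℝ), (0 : ℝ)) := by
  simp [pc, ContinuousLinearMap.prod_apply]
lemma pc_vM (k i : Fin n) : pc k (vM i) = ((0 : ℝ), (dd k i : ℝ)) := by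
  simp [pc, ContinuousLinearMap.prod_apply]

lemma DP_vL (k i : Fin n) (x : EE n) : DP f k x (vL i) = dd k i * A f k x := by
  rw [DP, ContinuousLinearMap.comp_apply, pc_vL]
  have h : ((dd k i : ℝ), (0 : ℝ)) = dd k i • ((1 : ℝ), (0 : ℝ)) := by
    simp [Prod.smul_mk]
  rw [h, map_smul, smul_eq_mul, A]

lemma DP_vM (k i : Fin n) (x : EE n) : DP f k x (vM i) = dd k i * B f k x := by
  rw [DP, ContinuousLinearMap.comp_apply, pc_vM]
  have h : ((0 : ℝ), (dd k i : ℝ)) = dd k i • ((0 : ℝ), (1 : ℝ)) := by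
    simp [Prod.smul_mk]
  rw [h, map_smul, smul_eq_mul, B]

lemma hasFDerivAt_P (hf : ∀ k, ContDiff ℝ (⊤ : ℕ∞) (f k)) (k : Fin n) (x : EE n) : HasFDerivAt (P f k) (DP f k x) x := by
  have h := ((hf k).differentiable (by simp) (x.1 k, x.2 k)).hasFDerivAt
  exact h.comp x (pc k).hasFDerivAt

def DA (k : Fin n) (x : EE n) : EE n →L[ℝ] ℝ :=
  (fderiv ℝ (fun p => fderiv ℝ (f k) p (1, 0)) (x.1 k, x.2 k)).comp (pc k)
def DB (k : Fin n) (x : EE n) : EE n →L[ℝ] ℝ :=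
  (fderiv ℝ (fun p => fderiv ℝ (f k) p (0, 1)) (x.1 k, x.2 k)).comp (pc k)

lemma hasFDerivAt_A (hf : ∀ k, ContDiff ℝ (⊤ : ℕ∞) (f k)) (k : Fin n) (x : EE n) : HasFDerivAt (A f k) (DA f k x) x := by
  have hψ : Differentiable ℝ (fun p => fderiv ℝ (f k) p ((1 : ℝ), (0 : ℝ))) := by
    have h1 : ContDiff ℝ (⊤ : ℕ∞) (fderiv ℝ (f k)) := (hf k).fderiv_right (by simp)
    exact ((ContinuousLinearMap.apply ℝ ℝ ((1 : ℝ), (0 : ℝ))).contDiff.comp h1).differentiable (by simp)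
  exact ((hψ (x.1 k, x.2 k)).hasFDerivAt).comp x (pc k).hasFDerivAt

lemma hasFDerivAt_B (hf : ∀ k, ContDiff ℝ (⊤ : ℕ∞) (f k)) (k : Fin n) (x : EE n) : HasFDerivAt (B f k) (DB f k x) x := by
  have hψ : Differentiable ℝ (fun p => fderiv ℝ (f k) p ((0 : ℝ), (1 : ℝ))) := by
    have h1 : ContDiff ℝ (⊤ : ℕ∞) (fderiv ℝ (f k)) := (hf k).fderiv_right (by simp)
    exact ((ContinuousLinearMap.apply ℝ ℝ ((0 : ℝ), (1 : ℝ))).contDiff.comp h1).differentiable (by simp)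
  exact ((hψ (x.1 k, x.2 k)).hasFDerivAt).comp x (pc k).hasFDerivAt

lemma DA_vL {k i : Fin n} (h : i ≠ k) (x : EE n) : DA f k x (vL i) = 0 := by
  rw [DA, ContinuousLinearMap.comp_apply, pc_vL]
  have : ((dd k i : ℝ), (0 : ℝ)) = (0 : ℝ × ℝ) := by simp [dd, Ne.symm h]
  rw [this, map_zero]

lemma DA_vM {k i : Fin n} (h : i ≠ k) (x : EE n) : DA f k x (vM i) = 0 := by
  rw [DA, ContinuousLinearMap.comp_apply, pc_vM]
  have : ((0 : ℝ), (dd k i : ℝ)) = (0 : ℝ × ℝ) := by simp [dd, Ne.symm h]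
  rw [this, map_zero]

lemma DB_vL {k i : Fin n} (h : i ≠ k) (x : EE n) : DB f k x (vL i) = 0 := by
  rw [DB, ContinuousLinearMap.comp_apply, pc_vL]
  have : ((dd k i : ℝ), (0 : ℝ)) = (0 : ℝ × ℝ) := by simp [dd, Ne.symm h]
  rw [this, map_zero]

lemma DB_vM {k i : Fin n} (h : i ≠ k) (x : EE n) : DB f k x (vM i) = 0 := by
  rw [DB, ContinuousLinearMap.comp_apply, pc_vM]
  have : ((0 : ℝ), (dd k i : ℝ)) = (0 : ℝ × ℝ) := by simp [dd, Ne.symm h]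
  rw [this, map_zero]


def Gm (j : Fin n) (x : EE n) : ℝ := B f j x * R j x
def Gl (j : Fin n) (x : EE n) : ℝ :=
  A f j x * R j x + ∑ k, P f k x * R k x * tt k j x

lemma Hgen_eq : Hgen f = fun x => ∑ k, P f k x * R k x := by
  funext x
  rw [Hgen]
  refine Finset.sum_congr rfl fun k _ => ?_
  rw [div_eq_mul_inv, P, R, Delta, ← Finset.prod_inv_distrib]

def DH (x : EE n) : EE n →L[ℝ] ℝ := ∑ k, (P f k x • DR k x + R k x • DP f k x)

lemma hasFDerivAt_H (hf : ∀ k, ContDiff ℝ (⊤ : ℕ∞) (f k)) {x : EE n}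
    (hx : ∀ a b : Fin n, a ≠ b → x.1 a ≠ x.1 b) :
    HasFDerivAt (Hgen f) (DH f x) x := by
  rw [Hgen_eq f]
  exact HasFDerivAt.fun_sum fun k _ => (hasFDerivAt_P f hf k x).mul (hasFDerivAt_R k hx)

lemma DH_vL (j : Fin n) (x : EE n) : DH f x (vL j) = Gl f j x := by
  rw [DH, ContinuousLinearMap.sum_apply, Gl]
  have h : ∀ k ∈ (univ : Finset (Fin n)),
      (P f k x • DR k x + R k x • DP f k x) (vL j)
        = P f k x * R k x * tt k j x + R k x * (dd k j * A f k x) := by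
    intro k _
    simp only [ContinuousLinearMap.add_apply, ContinuousLinearMap.smul_apply, smul_eq_mul,
      DR_vL, DP_vL]
    ring
  rw [Finset.sum_congr rfl h, Finset.sum_add_distrib, add_comm]
  congr 1
  rw [Finset.sum_eq_single j]
  · simp [dd]
    try ring
  · intro b _ hbj; simp [dd, hbj]
  · intro hj; exact absurd (Finset.mem_univ j) hj

lemma DH_vM (j : Fin n) (x : EE n) : DH f x (vM j) = Gm f j x := by
  rw [DH, ContinuousLinearMap.sum_apply, Gm]
  have h : ∀ k ∈ (univ : Finset (Fin n)),
      (P f k x • DR k x + R k x • DP f k x) (vM j)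
        = R k x * (dd k j * B f k x) := by
    intro k _
    simp only [ContinuousLinearMap.add_apply, ContinuousLinearMap.smul_apply, smul_eq_mul,
      DR_vM, DP_vM]
    ring
  rw [Finset.sum_congr rfl h, Finset.sum_eq_single j]
  · simp [dd]
    try ring
  · intro b _ hbj; simp [dd, hbj]
  · intro hj; exact absurd (Finset.mem_univ j) hj

lemma DlH (hf : ∀ k, ContDiff ℝ (⊤ : ℕ∞) (f k)) {y : EE n}
    (hy : ∀ a b : Fin n, a ≠ b → y.1 a ≠ y.1 b) (a : Fin n) :
    Dl a (Hgen f) y = Gl f a y := by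
  show fderiv ℝ (Hgen f) y (vL a) = _
  rw [(hasFDerivAt_H f hf hy).fderiv]
  exact DH_vL f a y

lemma DmH (hf : ∀ k, ContDiff ℝ (⊤ : ℕ∞) (f k)) {y : EE n}
    (hy : ∀ a b : Fin n, a ≠ b → y.1 a ≠ y.1 b) (a : Fin n) :
    Dm a (Hgen f) y = Gm f a y := by
  show fderiv ℝ (Hgen f) y (vM a) = _
  rw [(hasFDerivAt_H f hf hy).fderiv]
  exact DH_vM f a y

def DGm (j : Fin n) (x : EE n) : EE n →L[ℝ] ℝ := B f j x • DR j x + R j x • DB f j x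

lemma hasFDerivAt_Gm (hf : ∀ k, ContDiff ℝ (⊤ : ℕ∞) (f k)) (j : Fin n) {x : EE n}
    (hx : ∀ a b : Fin n, a ≠ b → x.1 a ≠ x.1 b) :
    HasFDerivAt (Gm f j) (DGm f j x) x :=
  (hasFDerivAt_B f hf j x).mul (hasFDerivAt_R j hx)

lemma DGm_vM {i j : Fin n} (hij : i ≠ j) (x : EE n) : DGm f j x (vM i) = 0 := by
  rw [DGm, ContinuousLinearMap.add_apply, ContinuousLinearMap.smul_apply,
    ContinuousLinearMap.smul_apply, DR_vM, DB_vM f hij]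
  simp

def DGl (j : Fin n) (x : EE n) : EE n →L[ℝ] ℝ :=
  (A f j x • DR j x + R j x • DA f j x)
    + ∑ k, ((P f k x * R k x) • Dtt k j x
        + tt k j x • (P f k x • DR k x + R k x • DP f k x))

lemma hasFDerivAt_Gl (hf : ∀ k, ContDiff ℝ (⊤ : ℕ∞) (f k)) (j : Fin n) {x : EE n}
    (hx : ∀ a b : Fin n, a ≠ b → x.1 a ≠ x.1 b) :
    HasFDerivAt (Gl f j) (DGl f j x) x := by
  refine HasFDerivAt.add ?_ (HasFDerivAt.fun_sum fun k _ => ?_)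
  · exact (hasFDerivAt_A f hf j x).mul (hasFDerivAt_R j hx)
  · exact ((hasFDerivAt_P f hf k x).mul (hasFDerivAt_R k hx)).mul (hasFDerivAt_tt k j hx)

lemma DGl_vM {i j : Fin n} (hij : i ≠ j) (x : EE n) :
    DGl f j x (vM i) = Gm f i x * (x.1 i - x.1 j)⁻¹ := by
  rw [DGl, ContinuousLinearMap.add_apply, ContinuousLinearMap.add_apply,
    ContinuousLinearMap.smul_apply, ContinuousLinearMap.smul_apply,
    DR_vM, DA_vM f hij, ContinuousLinearMap.sum_apply]
  have h : ∀ k ∈ (univ : Finset (Fin n)),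
      ((P f k x * R k x) • Dtt k j x
          + tt k j x • (P f k x • DR k x + R k x • DP f k x)) (vM i)
        = R k x * tt k j x * (dd k i * B f k x) := by
    intro k _
    simp only [ContinuousLinearMap.add_apply, ContinuousLinearMap.smul_apply, smul_eq_mul,
      Dtt_vM, DR_vM, DP_vM]
    ring
  rw [Finset.sum_congr rfl h, Finset.sum_eq_single i]
  · rw [tt_eq (Ne.symm hij) x, Gm]
    simp [dd]
    try ring
  · intro b _ hbi; simp [dd, hbi]
  · intro hi; exact absurd (Finset.mem_univ i) hi

lemma DGl_vL {i j : Fin n} {x : EE n} (hx : ∀ a b : Fin n, a ≠ b → x.1 a ≠ x.1 b)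
    (hij : i ≠ j) :
    DGl f j x (vL i) = (Gl f i x - Gl f j x) * (x.1 i - x.1 j)⁻¹ := by
  rw [DGl, ContinuousLinearMap.add_apply, ContinuousLinearMap.add_apply,
    ContinuousLinearMap.smul_apply, ContinuousLinearMap.smul_apply,
    DR_vL, DA_vL f hij, ContinuousLinearMap.sum_apply]
  have h : ∀ k ∈ (univ : Finset (Fin n)),
      ((P f k x * R k x) • Dtt k j x
          + tt k j x • (P f k x • DR k x + R k x • DP f k x)) (vL i)
        = P f k x * R k x * ((tt k i x - tt k j x) * (x.1 i - x.1 j)⁻¹)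
          + R k x * tt k j x * (dd k i * A f k x) := by
    intro k _
    simp only [ContinuousLinearMap.add_apply, ContinuousLinearMap.smul_apply, smul_eq_mul,
      DR_vL, DP_vL]
    have hs := star hx hij k
    linear_combination (P f k x * R k x) * hs
  rw [Finset.sum_congr rfl h, Finset.sum_add_distrib]
  have h3 : ∑ k, R k x * tt k j x * (dd k i * A f k x) = R i x * tt i j x * A f i x := by
    rw [Finset.sum_eq_single i]
    · simp [dd]
      try ring
    · intro b _ hbi; simp [dd, hbi]
    · intro hi; exact absurd (Finset.mem_univ i) hi
  rw [h3, tt_eq hij x, tt_eq (Ne.symm hij) x]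
  have h4 : (x.1 j - x.1 i)⁻¹ = -(x.1 i - x.1 j)⁻¹ := by rw [← neg_sub, inv_neg]
  rw [h4, Gl, Gl]
  rw [show ∑ k, P f k x * R k x * ((tt k i x - tt k j x) * (x.1 i - x.1 j)⁻¹)
      = (∑ k, P f k x * R k x * tt k i x - ∑ k, P f k x * R k x * tt k j x)
          * (x.1 i - x.1 j)⁻¹ from by
    rw [← Finset.sum_sub_distrib, Finset.sum_mul]
    exact Finset.sum_congr rfl fun k _ => by ring]
  simp only [smul_eq_mul, smul_zero, mul_zero]
  ring

lemma isOpen_distinct : IsOpen {y : EE n | ∀ a b : Fin n, a ≠ b → y.1 a ≠ y.1 b} := by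
  have h : {y : EE n | ∀ a b : Fin n, a ≠ b → y.1 a ≠ y.1 b}
      = ⋂ a, ⋂ b, ⋂ (_ : a ≠ b), {y : EE n | y.1 a ≠ y.1 b} := by
    ext y; simp [Set.mem_iInter]
  rw [h]
  exact isOpen_iInter_of_finite fun a => isOpen_iInter_of_finite fun b =>
    isOpen_iInter_of_finite fun _ =>
      isOpen_ne_fun ((continuous_apply a).comp continuous_fst)
        ((continuous_apply b).comp continuous_fst)

end PQBH

open Topology in
theorem pfaffian_qbh_H_levi_civita
    (n : ℕ) (hn : 2 ≤ n) (f : Fin n → ℝ × ℝ → ℝ)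
    (hf : ∀ k, ContDiff ℝ (⊤ : ℕ∞) (f k)) :
    ∀ l m : Fin n → ℝ, (∀ k j : Fin n, k ≠ j → l k ≠ l j) →
      ∀ i j : Fin n, i ≠ j → LC i j (Hgen f) (l, m) = 0 := by
  intro l m hlm i j hij
  have hx : ∀ a b : Fin n, a ≠ b → ((l, m) : PQBH.EE n).1 a ≠ ((l, m) : PQBH.EE n).1 b := hlm
  have hU : {y : PQBH.EE n | ∀ a b : Fin n, a ≠ b → y.1 a ≠ y.1 b} ∈ 𝓝 ((l, m) : PQBH.EE n) :=
    PQBH.isOpen_distinct.mem_nhds hx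
  have hevl : ∀ a : Fin n, Dl a (Hgen f) =ᶠ[𝓝 ((l, m) : PQBH.EE n)] PQBH.Gl f a :=
    fun a => Filter.eventuallyEq_of_mem hU fun y hy => PQBH.DlH f hf hy a
  have hevm : ∀ a : Fin n, Dm a (Hgen f) =ᶠ[𝓝 ((l, m) : PQBH.EE n)] PQBH.Gm f a :=
    fun a => Filter.eventuallyEq_of_mem hU fun y hy => PQBH.DmH f hf hy a
  have h1 : Dm i (Dm j (Hgen f)) (l, m) = 0 := by
    show fderiv ℝ (Dm j (Hgen f)) (l, m) (PQBH.vM i) = 0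
    rw [(hevm j).fderiv_eq, (PQBH.hasFDerivAt_Gm f hf j hx).fderiv]
    exact PQBH.DGm_vM f hij (l, m)
  have h2 : Dm i (Dl j (Hgen f)) (l, m) = PQBH.Gm f i (l, m) * (l i - l j)⁻¹ := by
    show fderiv ℝ (Dl j (Hgen f)) (l, m) (PQBH.vM i) = _
    rw [(hevl j).fderiv_eq, (PQBH.hasFDerivAt_Gl f hf j hx).fderiv]
    exact PQBH.DGl_vM f hij (l, m)
  have h3 : Dm j (Dl i (Hgen f)) (l, m) = PQBH.Gm f j (l, m) * (l j - l i)⁻¹ := by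
    show fderiv ℝ (Dl i (Hgen f)) (l, m) (PQBH.vM j) = _
    rw [(hevl i).fderiv_eq, (PQBH.hasFDerivAt_Gl f hf i hx).fderiv]
    exact PQBH.DGl_vM f (Ne.symm hij) (l, m)
  have h4 : Dl i (Dl j (Hgen f)) (l, m)
      = (PQBH.Gl f i (l, m) - PQBH.Gl f j (l, m)) * (l i - l j)⁻¹ := by
    show fderiv ℝ (Dl j (Hgen f)) (l, m) (PQBH.vL i) = _
    rw [(hevl j).fderiv_eq, (PQBH.hasFDerivAt_Gl f hf j hx).fderiv]
    exact PQBH.DGl_vL f hx hij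
  have h5 : Dl i (Hgen f) (l, m) = PQBH.Gl f i (l, m) := PQBH.DlH f hf hx i
  have h6 : Dl j (Hgen f) (l, m) = PQBH.Gl f j (l, m) := PQBH.DlH f hf hx j
  have h7 : Dm i (Hgen f) (l, m) = PQBH.Gm f i (l, m) := PQBH.DmH f hf hx i
  have h8 : Dm j (Hgen f) (l, m) = PQBH.Gm f j (l, m) := PQBH.DmH f hf hx j
  rw [LC, h1, h2, h3, h4, h5, h6, h7, h8]
  have h9 : (l j - l i)⁻¹ = -(l i - l j)⁻¹ := by rw [← neg_sub, inv_neg]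
  rw [h9]
  ring

end
end

section
/- Separability of the second function of the general Pfaffian quasi-biHamiltonian system: for every n ≥ 2 and every choice of n smooth functions f_i : ℝ × ℝ → ℝ, the function F(λ,μ) = Σ_{k=1}^{n} ρ_k f_k(λ_k, μ_k)/Δ_k, where ρ_k := Π_{j≠k} λ_j, satisfies the Levi-Civita separability conditions L_ij(F) = 0 for all i ≠ j at every point (λ,μ) with the λ_k pairwise distinct and all nonzero. -/
/- STATEMENT 18: separability of the second function of the general Pfaffian
quasi-biHamiltonian system F(λ,μ) = Σ_k ρ_k f_k(λ_k,μ_k)/Δ_k: the Levi-Civita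
conditions L_ij(F) = 0 hold for all i ≠ j wherever the λ_k are pairwise
distinct and nonzero. -/

noncomputable section

open Finset

/-- `ρ_k(λ) = Π_{j ≠ k} λ_j`. -/
def rhoi {n : ℕ} (k : Fin n) (l : Fin n → ℝ) : ℝ :=
  ∏ j ∈ univ.erase k, l j

/-- `F(λ,μ) = Σ_k ρ_k f_k(λ_k,μ_k)/Δ_k`. -/
def Fgen {n : ℕ} (f : Fin n → ℝ × ℝ → ℝ) (x : (Fin n → ℝ) × (Fin n → ℝ)) : ℝ :=
  ∑ k, rhoi k x.1 * f k (x.1 k, x.2 k) / Delta k x.1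

/-! ### Directional derivative framework -/

section PDir

variable {X : Type*} [NormedAddCommGroup X] [NormedSpace ℝ X]

/-- `φ` is differentiable at `x` and its derivative in direction `w` is `d`. -/
def HasPDir (φ : X → ℝ) (x w : X) (d : ℝ) : Prop :=
  DifferentiableAt ℝ φ x ∧ fderiv ℝ φ x w = d

variable {φ ψ : X → ℝ} {x w : X} {d d' e : ℝ}

lemma HasPDir.congr_d (h : HasPDir φ x w d) (hd : d = d') : HasPDir φ x w d' := hd ▸ h

lemma HasPDir.congr_fn (h : HasPDir φ x w d) (he : ∀ y, φ y = ψ y) : HasPDir ψ x w d := by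
  have : φ = ψ := funext he
  exact this ▸ h

lemma HasPDir.zero (h : HasPDir φ x w d) : HasPDir φ x 0 0 :=
  ⟨h.1, by simp⟩

lemma hasPDir_const (c : ℝ) : HasPDir (fun _ => c) x w 0 :=
  ⟨differentiableAt_const c, by simp⟩

lemma HasPDir.add (h1 : HasPDir φ x w d) (h2 : HasPDir ψ x w e) :
    HasPDir (fun y => φ y + ψ y) x w (d + e) :=
  ⟨h1.1.add h2.1, by rw [fderiv_fun_add h1.1 h2.1]; simp [h1.2, h2.2]⟩

lemma HasPDir.neg (h : HasPDir φ x w d) : HasPDir (fun y => -φ y) x w (-d) :=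
  ⟨h.1.neg, by rw [fderiv_fun_neg]; simp [h.2]⟩

lemma HasPDir.sub (h1 : HasPDir φ x w d) (h2 : HasPDir ψ x w e) :
    HasPDir (fun y => φ y - ψ y) x w (d - e) :=
  ⟨h1.1.sub h2.1, by rw [fderiv_fun_sub h1.1 h2.1]; simp [h1.2, h2.2]⟩

lemma HasPDir.mul (h1 : HasPDir φ x w d) (h2 : HasPDir ψ x w e) :
    HasPDir (fun y => φ y * ψ y) x w (d * ψ x + φ x * e) :=
  ⟨h1.1.mul h2.1, by
    rw [fderiv_fun_mul h1.1 h2.1]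
    simp [h1.2, h2.2]
    ring⟩

lemma HasPDir.inv (h : HasPDir φ x w d) (h0 : φ x ≠ 0) :
    HasPDir (fun y => (φ y)⁻¹) x w (-((φ x ^ 2)⁻¹ * d)) := by
  have hcomp : HasFDerivAt (fun y => (φ y)⁻¹)
      ((-(φ x ^ 2)⁻¹ : ℝ) • fderiv ℝ φ x) x :=
    (hasDerivAt_inv h0).comp_hasFDerivAt x h.1.hasFDerivAt
  exact ⟨hcomp.differentiableAt, by rw [hcomp.fderiv]; simp [h.2]⟩

lemma HasPDir.div (h1 : HasPDir φ x w d) (h2 : HasPDir ψ x w e) (h0 : ψ x ≠ 0) :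
    HasPDir (fun y => φ y / ψ y) x w ((d * ψ x - φ x * e) / ψ x ^ 2) := by
  have := (h1.mul (h2.inv h0)).congr_fn (ψ := fun y => φ y / ψ y)
    (fun y => (div_eq_mul_inv (φ y) (ψ y)).symm)
  refine this.congr_d ?_
  field_simp
  ring

lemma HasPDir.finsum {ι : Type*} {u : Finset ι} {g : ι → X → ℝ} {dg : ι → ℝ}
    (h : ∀ a ∈ u, HasPDir (g a) x w (dg a)) :
    HasPDir (fun y => ∑ a ∈ u, g a y) x w (∑ a ∈ u, dg a) := by
  refine ⟨DifferentiableAt.fun_sum (fun a ha => (h a ha).1), ?_⟩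
  rw [fderiv_fun_sum (fun a ha => (h a ha).1)]
  simp only [ContinuousLinearMap.coe_sum', Finset.sum_apply]
  exact Finset.sum_congr rfl fun a ha => (h a ha).2

lemma HasPDir.finprod {ι : Type*} [DecidableEq ι] {u : Finset ι} {g : ι → X → ℝ} {dg : ι → ℝ}
    (h : ∀ a ∈ u, HasPDir (g a) x w (dg a)) :
    HasPDir (fun y => ∏ a ∈ u, g a y) x w (∑ a ∈ u, (∏ b ∈ u.erase a, g b x) * dg a) := by
  have hD : HasFDerivAt (∏ a ∈ u, g a ·)
      (∑ a ∈ u, (∏ b ∈ u.erase a, g b x) • fderiv ℝ (g a) x) x :=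
    HasFDerivAt.finset_prod (fun a ha => (h a ha).1.hasFDerivAt)
  refine ⟨hD.differentiableAt, ?_⟩
  rw [hD.fderiv]
  simp only [ContinuousLinearMap.coe_sum', Finset.sum_apply,
    ContinuousLinearMap.coe_smul', Pi.smul_apply, smul_eq_mul]
  exact Finset.sum_congr rfl fun a ha => by rw [(h a ha).2]

lemma hasPDir_clm (A : X →L[ℝ] ℝ) : HasPDir (fun y => A y) x w (A w) :=
  ⟨A.differentiableAt, by rw [A.fderiv]⟩

end PDir

lemma hasPDir_coord {n : ℕ} (a : Fin n) (v w : Fin n → ℝ) :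
    HasPDir (fun y : Fin n → ℝ => y a) v w (w a) := by
  have h : HasFDerivAt (fun y : Fin n → ℝ => y a)
      (ContinuousLinearMap.proj a : (Fin n → ℝ) →L[ℝ] ℝ) v :=
    (ContinuousLinearMap.proj a : (Fin n → ℝ) →L[ℝ] ℝ).hasFDerivAt
  exact ⟨h.differentiableAt, by rw [h.fderiv]; rfl⟩


/-! ### The coefficient functions and their partial derivatives -/

variable {n : ℕ}

/-- `c_k = ρ_k / Δ_k`. -/
def cf (k : Fin n) (v : Fin n → ℝ) : ℝ := rhoi k v / Delta k v

/-- `S_k = Σ_{m ≠ k} (λ_k − λ_m)⁻¹`. -/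
def Sf (k : Fin n) (v : Fin n → ℝ) : ℝ := ∑ m ∈ univ.erase k, (v k - v m)⁻¹

/-- `b_{ik} = λ_i⁻¹ + (λ_k − λ_i)⁻¹`. -/
def bf (i k : Fin n) (v : Fin n → ℝ) : ℝ := (v i)⁻¹ + (v k - v i)⁻¹

/-- `∂_i c_k`. -/
def dcb (i k : Fin n) (v : Fin n → ℝ) : ℝ :=
  if k = i then -(cf k v * Sf k v) else cf k v * bf i k v

/-- `∂_i ∂_j c_k` (for `i ≠ j`). -/
def ddc (i j k : Fin n) (v : Fin n → ℝ) : ℝ :=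
  if k = j then -(dcb i j v * Sf j v + cf j v * ((v j - v i) ^ 2)⁻¹)
  else dcb i k v * bf j k v + cf k v * (if i = k then -(((v k - v j) ^ 2)⁻¹) else 0)

section EList

variable {v : Fin n → ℝ} (hd : ∀ a b : Fin n, a ≠ b → v a ≠ v b) (h0 : ∀ a, v a ≠ 0)

include hd in
lemma Delta_ne_zero (k : Fin n) : Delta k v ≠ 0 := by
  rw [Delta, Finset.prod_ne_zero_iff]
  intro j hj
  exact sub_ne_zero.mpr (hd k j fun h => (Finset.mem_erase.mp hj).1 h.symm)

include h0 in
lemma rhoi_ne_zero (k : Fin n) : rhoi k v ≠ 0 := by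
  rw [rhoi, Finset.prod_ne_zero_iff]
  exact fun j _ => h0 j

include hd in
lemma prod_erase_Delta {k j : Fin n} (hj : j ∈ univ.erase k) :
    ∏ b ∈ (univ.erase k).erase j, (v k - v b) = Delta k v * (v k - v j)⁻¹ := by
  have hkj : v k - v j ≠ 0 :=
    sub_ne_zero.mpr (hd k j fun h => (Finset.mem_erase.mp hj).1 h.symm)
  have h := Finset.mul_prod_erase (univ.erase k) (fun b => v k - v b) hj
  rw [← Delta] at h
  rw [eq_mul_inv_iff_mul_eq₀ hkj, ← h]
  ring

include h0 in
lemma prod_erase_rhoi {k j : Fin n} (hj : j ∈ univ.erase k) :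
    ∏ b ∈ (univ.erase k).erase j, v b = rhoi k v * (v j)⁻¹ := by
  have h := Finset.mul_prod_erase (univ.erase k) (fun b => v b) hj
  rw [← rhoi] at h
  rw [eq_mul_inv_iff_mul_eq₀ (h0 j), ← h]
  ring

include hd in
lemma hasPDir_Delta (i k : Fin n) :
    HasPDir (Delta k) v (Pi.single i 1)
      (if i = k then Delta k v * Sf k v else -(Delta k v * (v k - v i)⁻¹)) := by
  have h : HasPDir (fun y : Fin n → ℝ => ∏ a ∈ univ.erase k, (y k - y a)) v (Pi.single i 1)
      (∑ a ∈ univ.erase k, (∏ b ∈ (univ.erase k).erase a, (v k - v b)) *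
        ((Pi.single i 1 : Fin n → ℝ) k - (Pi.single i 1 : Fin n → ℝ) a)) := by
    exact HasPDir.finprod
      (fun a _ => by exact (hasPDir_coord k v _).sub (hasPDir_coord a v _))
  have h' : HasPDir (Delta k) v (Pi.single i 1)
      (∑ a ∈ univ.erase k, (∏ b ∈ (univ.erase k).erase a, (v k - v b)) *
        ((Pi.single i 1 : Fin n → ℝ) k - (Pi.single i 1 : Fin n → ℝ) a)) :=
    h.congr_fn (fun y => rfl)
  refine h'.congr_d ?_
  by_cases hik : i = k
  · subst hik
    rw [if_pos rfl]
    rw [Finset.sum_congr rfl (fun a ha => ?_), ← Finset.mul_sum]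
    · rw [Sf]
    · rw [prod_erase_Delta hd ha, Pi.single_eq_same,
        Pi.single_eq_of_ne (Finset.mem_erase.mp ha).1, sub_zero, mul_one]
  · rw [if_neg hik]
    rw [Finset.sum_eq_single i]
    · rw [prod_erase_Delta hd (by simp [hik]), Pi.single_eq_same,
        Pi.single_eq_of_ne (Ne.symm hik), zero_sub, mul_neg, mul_one]
    · intro b hb hbi
      rw [Pi.single_eq_of_ne (Ne.symm hik), Pi.single_eq_of_ne hbi]
      simp
    · intro hi
      exact absurd (by simp [hik]) hi

include h0 in
lemma hasPDir_rhoi (i k : Fin n) :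
    HasPDir (rhoi k) v (Pi.single i 1)
      (if i = k then 0 else rhoi k v * (v i)⁻¹) := by
  have h : HasPDir (fun y : Fin n → ℝ => ∏ a ∈ univ.erase k, y a) v (Pi.single i 1)
      (∑ a ∈ univ.erase k, (∏ b ∈ (univ.erase k).erase a, v b) * (Pi.single i 1 : Fin n → ℝ) a) := by
    exact HasPDir.finprod (fun a _ => by exact hasPDir_coord a v _)
  have h' : HasPDir (rhoi k) v (Pi.single i 1)
      (∑ a ∈ univ.erase k, (∏ b ∈ (univ.erase k).erase a, v b) * (Pi.single i 1 : Fin n → ℝ) a) :=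
    h.congr_fn (fun y => rfl)
  refine h'.congr_d ?_
  by_cases hik : i = k
  · subst hik
    rw [if_pos rfl]
    apply Finset.sum_eq_zero
    intro a ha
    rw [Pi.single_eq_of_ne (fun h => (Finset.mem_erase.mp ha).1 h), mul_zero]
  · rw [if_neg hik]
    rw [Finset.sum_eq_single i]
    · rw [prod_erase_rhoi h0 (by simp [hik]), Pi.single_eq_same, mul_one]
    · intro b hb hbi
      rw [Pi.single_eq_of_ne hbi, mul_zero]
    · intro hi
      exact absurd (by simp [hik]) hi

include hd h0 in
lemma hasPDir_cf (i k : Fin n) :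
    HasPDir (cf k) v (Pi.single i 1) (dcb i k v) := by
  have hD := Delta_ne_zero hd k
  have hR := rhoi_ne_zero h0 k
  have h := ((hasPDir_rhoi h0 i k).div (hasPDir_Delta hd i k) hD).congr_fn
    (ψ := cf k) (fun y => rfl)
  refine h.congr_d ?_
  by_cases hik : i = k
  · subst hik
    rw [if_pos rfl, dcb, if_pos rfl, cf]
    simp only [eq_self_iff_true, ↓reduceIte]
    field_simp
    ring
  · have hvk : v k - v i ≠ 0 := sub_ne_zero.mpr (hd k i (Ne.symm hik))
    rw [if_neg hik, if_neg hik, dcb, if_neg (fun h => hik h.symm), cf, bf]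
    field_simp
    ring

include hd in
lemma hasPDir_Sf {i k : Fin n} (hik : i ≠ k) :
    HasPDir (Sf k) v (Pi.single i 1) (((v k - v i) ^ 2)⁻¹) := by
  have h : HasPDir (fun y : Fin n → ℝ => ∑ m ∈ univ.erase k, (y k - y m)⁻¹) v (Pi.single i 1)
      (∑ m ∈ univ.erase k, -(((v k - v m) ^ 2)⁻¹ *
        ((Pi.single i 1 : Fin n → ℝ) k - (Pi.single i 1 : Fin n → ℝ) m))) := by
    refine HasPDir.finsum (fun m hm => ?_)
    exact ((hasPDir_coord k v _).sub (hasPDir_coord m v _)).inv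
      (sub_ne_zero.mpr (hd k m (fun h => (Finset.mem_erase.mp hm).1 h.symm)))
  have h' : HasPDir (Sf k) v (Pi.single i 1)
      (∑ m ∈ univ.erase k, -(((v k - v m) ^ 2)⁻¹ *
        ((Pi.single i 1 : Fin n → ℝ) k - (Pi.single i 1 : Fin n → ℝ) m))) :=
    h.congr_fn (fun y => rfl)
  refine h'.congr_d ?_
  rw [Finset.sum_eq_single i]
  · rw [Pi.single_eq_same, Pi.single_eq_of_ne (Ne.symm hik)]
    ring
  · intro b hb hbi
    rw [Pi.single_eq_of_ne (Ne.symm hik), Pi.single_eq_of_ne hbi]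
    ring
  · intro hi
    exact absurd (by simp [hik]) hi

include hd h0 in
lemma hasPDir_bf {i j k : Fin n} (hij : i ≠ j) (hkj : k ≠ j) :
    HasPDir (bf j k) v (Pi.single i 1)
      (if i = k then -(((v k - v j) ^ 2)⁻¹) else 0) := by
  have hvj : v j ≠ 0 := h0 j
  have hkj' : v k - v j ≠ 0 := sub_ne_zero.mpr (hd k j hkj)
  have h1 : HasPDir (fun y : Fin n → ℝ => (y j)⁻¹) v (Pi.single i 1)
      (-((v j ^ 2)⁻¹ * (Pi.single i 1 : Fin n → ℝ) j)) := by
    exact (hasPDir_coord j v _).inv hvj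
  have h2 : HasPDir (fun y : Fin n → ℝ => (y k - y j)⁻¹) v (Pi.single i 1)
      (-(((v k - v j) ^ 2)⁻¹ *
        ((Pi.single i 1 : Fin n → ℝ) k - (Pi.single i 1 : Fin n → ℝ) j))) := by
    exact ((hasPDir_coord k v _).sub (hasPDir_coord j v _)).inv hkj'
  have h := (h1.add h2).congr_fn (ψ := bf j k) (fun y => rfl)
  refine h.congr_d ?_
  rw [Pi.single_eq_of_ne (Ne.symm hij)]
  by_cases hik : i = k
  · subst hik
    rw [if_pos rfl, Pi.single_eq_same]
    ring
  · rw [if_neg hik, Pi.single_eq_of_ne (fun h => hik h.symm)]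
    ring

include hd h0 in
lemma hasPDir_dcb {i j : Fin n} (k : Fin n) (hij : i ≠ j) :
    HasPDir (dcb j k) v (Pi.single i 1) (ddc i j k v) := by
  by_cases hkj : k = j
  · subst hkj
    have h := (((hasPDir_cf hd h0 i k).mul (hasPDir_Sf hd hij)).neg).congr_fn
      (ψ := dcb k k) (fun y => by simp [dcb])
    refine h.congr_d ?_
    rw [ddc, if_pos rfl]
  · have h := ((hasPDir_cf hd h0 i k).mul (hasPDir_bf hd h0 hij hkj)).congr_fn
      (ψ := dcb j k) (fun y => by simp [dcb, hkj])
    refine h.congr_d ?_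
    rw [ddc, if_neg hkj]

end EList

/-! ### Product-space derivatives -/

section Pside

variable {n : ℕ}

lemma hasPDir_comp_fst {φ : (Fin n → ℝ) → ℝ} {l m w1 w2 : Fin n → ℝ} {d : ℝ}
    (h : HasPDir φ l w1 d) :
    HasPDir (fun x : (Fin n → ℝ) × (Fin n → ℝ) => φ x.1) (l, m) (w1, w2) d := by
  have hc : HasFDerivAt (fun x : (Fin n → ℝ) × (Fin n → ℝ) => φ x.1)
      ((fderiv ℝ φ l).comp (ContinuousLinearMap.fst ℝ (Fin n → ℝ) (Fin n → ℝ))) (l, m) :=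
    h.1.hasFDerivAt.comp (l, m) hasFDerivAt_fst
  exact ⟨hc.differentiableAt, by rw [hc.fderiv]; exact h.2⟩

/-- the continuous linear map `x ↦ (x.1 k, x.2 k)`. -/
def prodProj (n : ℕ) (k : Fin n) : ((Fin n → ℝ) × (Fin n → ℝ)) →L[ℝ] ℝ × ℝ :=
  ((ContinuousLinearMap.proj k).comp (ContinuousLinearMap.fst ℝ (Fin n → ℝ) (Fin n → ℝ))).prod
    ((ContinuousLinearMap.proj k).comp (ContinuousLinearMap.snd ℝ (Fin n → ℝ) (Fin n → ℝ)))

lemma hasPDir_inner {F : ℝ × ℝ → ℝ} {l m : Fin n → ℝ} (k : Fin n)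
    (hF : DifferentiableAt ℝ F (l k, m k)) (w : (Fin n → ℝ) × (Fin n → ℝ)) :
    HasPDir (fun x : (Fin n → ℝ) × (Fin n → ℝ) => F (x.1 k, x.2 k)) (l, m) w
      (fderiv ℝ F (l k, m k) (w.1 k, w.2 k)) := by
  have hπ : HasFDerivAt (fun x : (Fin n → ℝ) × (Fin n → ℝ) => ((x.1 k, x.2 k) : ℝ × ℝ))
      (prodProj n k) (l, m) := (prodProj n k).hasFDerivAt
  have hc : HasFDerivAt (fun x : (Fin n → ℝ) × (Fin n → ℝ) => F (x.1 k, x.2 k))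
      ((fderiv ℝ F (l k, m k)).comp (prodProj n k)) (l, m) :=
    hF.hasFDerivAt.comp (l, m) hπ
  exact ⟨hc.differentiableAt, by rw [hc.fderiv]; rfl⟩

variable (f : Fin n → ℝ × ℝ → ℝ)

/-- `∂f_k/∂μ (λ_k, μ_k)`. -/
def gP (k : Fin n) (x : (Fin n → ℝ) × (Fin n → ℝ)) : ℝ :=
  fderiv ℝ (f k) (x.1 k, x.2 k) (0, 1)

/-- `∂f_k/∂λ (λ_k, μ_k)`. -/
def hP (k : Fin n) (x : (Fin n → ℝ) × (Fin n → ℝ)) : ℝ :=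
  fderiv ℝ (f k) (x.1 k, x.2 k) (1, 0)

/-- explicit formula for `∂F/∂μ_i`. -/
def Gm (i : Fin n) (x : (Fin n → ℝ) × (Fin n → ℝ)) : ℝ := cf i x.1 * gP f i x

/-- explicit formula for `∂F/∂λ_j`. -/
def Gl (j : Fin n) (x : (Fin n → ℝ) × (Fin n → ℝ)) : ℝ :=
  (∑ k, dcb j k x.1 * f k (x.1 k, x.2 k)) + cf j x.1 * hP f j x

lemma Fgen_eq (x : (Fin n → ℝ) × (Fin n → ℝ)) :
    (∑ k, cf k x.1 * f k (x.1 k, x.2 k)) = Fgen f x := by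
  refine Finset.sum_congr rfl fun k _ => ?_
  rw [cf, div_mul_eq_mul_div]

variable {f}
variable (hf : ∀ k, ContDiff ℝ (⊤ : ℕ∞) (f k))
variable {l m : Fin n → ℝ}
variable (hd : ∀ a b : Fin n, a ≠ b → l a ≠ l b) (h0 : ∀ a, l a ≠ 0)

include hf hd h0

lemma hasPDir_Fgen_l (i : Fin n) :
    HasPDir (Fgen f) (l, m) ((Pi.single i 1 : Fin n → ℝ), (0 : Fin n → ℝ))
      (Gl f i (l, m)) := by
  have hsum : HasPDir (fun x : (Fin n → ℝ) × (Fin n → ℝ) => ∑ k, cf k x.1 * f k (x.1 k, x.2 k))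
      (l, m) ((Pi.single i 1 : Fin n → ℝ), (0 : Fin n → ℝ))
      (∑ k, (dcb i k l * f k (l k, m k) +
        cf k l * fderiv ℝ (f k) (l k, m k)
          ((Pi.single i 1 : Fin n → ℝ) k, (0 : Fin n → ℝ) k))) := by
    refine HasPDir.finsum (fun k _ => ?_)
    exact (hasPDir_comp_fst (hasPDir_cf hd h0 i k)).mul
      (hasPDir_inner k ((hf k).differentiable (by simp) _) _)
  refine ((hsum.congr_fn (Fgen_eq f)).congr_d ?_)
  rw [Finset.sum_add_distrib, Gl]
  congr 1
  rw [Finset.sum_eq_single i]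
  · simp [hP]
  · intro b _ hbi
    simp [Pi.single_eq_of_ne hbi, Prod.mk_zero_zero]
  · simp

lemma hasPDir_Fgen_m (i : Fin n) :
    HasPDir (Fgen f) (l, m) ((0 : Fin n → ℝ), (Pi.single i 1 : Fin n → ℝ))
      (Gm f i (l, m)) := by
  have hsum : HasPDir (fun x : (Fin n → ℝ) × (Fin n → ℝ) => ∑ k, cf k x.1 * f k (x.1 k, x.2 k))
      (l, m) ((0 : Fin n → ℝ), (Pi.single i 1 : Fin n → ℝ))
      (∑ k, (0 * f k (l k, m k) +
        cf k l * fderiv ℝ (f k) (l k, m k)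
          ((0 : Fin n → ℝ) k, (Pi.single i 1 : Fin n → ℝ) k))) := by
    refine HasPDir.finsum (fun k _ => ?_)
    exact (hasPDir_comp_fst ((hasPDir_cf hd h0 i k).zero)).mul
      (hasPDir_inner k ((hf k).differentiable (by simp) _) _)
  refine ((hsum.congr_fn (Fgen_eq f)).congr_d ?_)
  rw [Finset.sum_eq_single i]
  · simp [Gm, gP]
  · intro b _ hbi
    simp [Pi.single_eq_of_ne hbi, Prod.mk_zero_zero]
  · simp

lemma Dl_Fgen_eq (i : Fin n) : Dl i (Fgen f) (l, m) = Gl f i (l, m) :=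
  (hasPDir_Fgen_l hf hd h0 i).2

lemma Dm_Fgen_eq (i : Fin n) : Dm i (Fgen f) (l, m) = Gm f i (l, m) :=
  (hasPDir_Fgen_m hf hd h0 i).2

/-- `∂μ_i ∂μ_j F = 0` for `i ≠ j`. -/
lemma hasPDir_Gm_m {i j : Fin n} (hij : i ≠ j) :
    HasPDir (Gm f j) (l, m) ((0 : Fin n → ℝ), (Pi.single i 1 : Fin n → ℝ)) 0 := by
  have hA : ContDiff ℝ (⊤ : ℕ∞) (fun p : ℝ × ℝ => fderiv ℝ (f j) p (0, 1)) :=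
    ((hf j).fderiv_right (by simp)).clm_apply contDiff_const
  have h := (hasPDir_comp_fst (m := m)
      (w2 := (Pi.single i 1 : Fin n → ℝ)) ((hasPDir_cf hd h0 i j).zero)).mul
    (hasPDir_inner j (hA.differentiable (by simp) (l j, m j))
      ((0 : Fin n → ℝ), (Pi.single i 1 : Fin n → ℝ)))
  refine (h.congr_fn (fun y => rfl)).congr_d ?_
  simp [Pi.single_eq_of_ne (Ne.symm hij), Prod.mk_zero_zero]

/-- `∂μ_i ∂λ_j F = (∂_j c_i) g_i` for `i ≠ j`. -/
lemma hasPDir_Gl_m {i j : Fin n} (hij : i ≠ j) :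
    HasPDir (Gl f j) (l, m) ((0 : Fin n → ℝ), (Pi.single i 1 : Fin n → ℝ))
      (dcb j i l * gP f i (l, m)) := by
  have hB : ContDiff ℝ (⊤ : ℕ∞) (fun p : ℝ × ℝ => fderiv ℝ (f j) p (1, 0)) :=
    ((hf j).fderiv_right (by simp)).clm_apply contDiff_const
  have hsum : HasPDir (fun x : (Fin n → ℝ) × (Fin n → ℝ) => ∑ k, dcb j k x.1 * f k (x.1 k, x.2 k))
      (l, m) ((0 : Fin n → ℝ), (Pi.single i 1 : Fin n → ℝ))
      (∑ k, (0 * f k (l k, m k) +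
        dcb j k l * fderiv ℝ (f k) (l k, m k)
          ((0 : Fin n → ℝ) k, (Pi.single i 1 : Fin n → ℝ) k))) := by
    refine HasPDir.finsum (fun k _ => ?_)
    exact (hasPDir_comp_fst ((hasPDir_dcb hd h0 k hij).zero)).mul
      (hasPDir_inner k ((hf k).differentiable (by simp) _) _)
  have hlast := (hasPDir_comp_fst (m := m)
      (w2 := (Pi.single i 1 : Fin n → ℝ)) ((hasPDir_cf hd h0 i j).zero)).mul
    (hasPDir_inner j (hB.differentiable (by simp) (l j, m j))
      ((0 : Fin n → ℝ), (Pi.single i 1 : Fin n → ℝ)))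
  have h := (hsum.add hlast).congr_fn (ψ := Gl f j) (fun y => rfl)
  refine h.congr_d ?_
  rw [Finset.sum_eq_single i]
  · simp [gP, Pi.single_eq_of_ne (Ne.symm hij), Prod.mk_zero_zero]
  · intro b _ hbi
    simp [Pi.single_eq_of_ne hbi, Prod.mk_zero_zero]
  · simp

/-- `∂λ_i ∂λ_j F` for `i ≠ j`. -/
lemma hasPDir_Gl_l {i j : Fin n} (hij : i ≠ j) :
    HasPDir (Gl f j) (l, m) ((Pi.single i 1 : Fin n → ℝ), (0 : Fin n → ℝ))
      ((∑ k, ddc i j k l * f k (l k, m k)) + dcb j i l * hP f i (l, m)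
        + dcb i j l * hP f j (l, m)) := by
  have hB : ContDiff ℝ (⊤ : ℕ∞) (fun p : ℝ × ℝ => fderiv ℝ (f j) p (1, 0)) :=
    ((hf j).fderiv_right (by simp)).clm_apply contDiff_const
  have hsum : HasPDir (fun x : (Fin n → ℝ) × (Fin n → ℝ) => ∑ k, dcb j k x.1 * f k (x.1 k, x.2 k))
      (l, m) ((Pi.single i 1 : Fin n → ℝ), (0 : Fin n → ℝ))
      (∑ k, (ddc i j k l * f k (l k, m k) +
        dcb j k l * fderiv ℝ (f k) (l k, m k)
          ((Pi.single i 1 : Fin n → ℝ) k, (0 : Fin n → ℝ) k))) := by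
    refine HasPDir.finsum (fun k _ => ?_)
    exact (hasPDir_comp_fst (hasPDir_dcb hd h0 k hij)).mul
      (hasPDir_inner k ((hf k).differentiable (by simp) _) _)
  have hlast := (hasPDir_comp_fst (m := m)
      (w2 := (0 : Fin n → ℝ)) (hasPDir_cf hd h0 i j)).mul
    (hasPDir_inner j (hB.differentiable (by simp) (l j, m j))
      ((Pi.single i 1 : Fin n → ℝ), (0 : Fin n → ℝ)))
  have h := (hsum.add hlast).congr_fn (ψ := Gl f j) (fun y => rfl)
  refine h.congr_d ?_
  rw [Finset.sum_add_distrib]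
  rw [Finset.sum_eq_single i (f := fun k => dcb j k l * fderiv ℝ (f k) (l k, m k)
      ((Pi.single i 1 : Fin n → ℝ) k, (0 : Fin n → ℝ) k))]
  · simp only [Pi.single_eq_same, Pi.zero_apply, Prod.fst, Prod.snd,
      Pi.single_eq_of_ne (Ne.symm hij), Prod.mk_zero_zero, map_zero, mul_zero, add_zero]
    simp only [hP]
    try ring
  · intro b _ hbi
    simp [Pi.single_eq_of_ne hbi, Prod.mk_zero_zero]
  · simp

end Pside

/-! ### The main theorem -/

section Main

open Topology

variable {n : ℕ}

/-- the good set of `λ`-values. -/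
def Ugood (n : ℕ) : Set (Fin n → ℝ) :=
  {v | (∀ a b : Fin n, a ≠ b → v a ≠ v b) ∧ ∀ a, v a ≠ 0}

lemma isOpen_Ugood : IsOpen (Ugood n) := by
  have h1 : ∀ a b : Fin n, IsOpen {v : Fin n → ℝ | a ≠ b → v a ≠ v b} := by
    intro a b
    by_cases hab : a = b
    · convert isOpen_univ
      ext v
      simp [hab]
    · convert isOpen_ne_fun (continuous_apply (A := fun _ : Fin n => ℝ) a)
        (continuous_apply (A := fun _ : Fin n => ℝ) b) using 1
      ext v
      simp [hab]
  have h2 : ∀ a : Fin n, IsOpen {v : Fin n → ℝ | v a ≠ 0} := fun a =>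
    isOpen_ne_fun (continuous_apply (A := fun _ : Fin n => ℝ) a) continuous_const
  have hU : Ugood n =
      (⋂ a, ⋂ b, {v : Fin n → ℝ | a ≠ b → v a ≠ v b}) ∩ ⋂ a, {v : Fin n → ℝ | v a ≠ 0} := by
    ext v
    simp [Ugood, Set.mem_iInter]
  rw [hU]
  exact ((isOpen_iInter_of_finite fun a => isOpen_iInter_of_finite fun b => h1 a b).inter
    (isOpen_iInter_of_finite h2))

theorem pfaffian_qbh_F_levi_civita
    (n : ℕ) (hn : 2 ≤ n) (f : Fin n → ℝ × ℝ → ℝ)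
    (hf : ∀ k, ContDiff ℝ (⊤ : ℕ∞) (f k)) :
    ∀ l m : Fin n → ℝ, (∀ k j : Fin n, k ≠ j → l k ≠ l j) → (∀ k, l k ≠ 0) →
      ∀ i j : Fin n, i ≠ j → LC i j (Fgen f) (l, m) = 0 := by
  intro l m hd h0 i j hij
  have hji : j ≠ i := Ne.symm hij
  -- the set where everything is nice is a neighborhood of (l, m)
  have hV : (Prod.fst ⁻¹' Ugood n : Set ((Fin n → ℝ) × (Fin n → ℝ))) ∈ 𝓝 (l, m) :=
    (isOpen_Ugood.preimage continuous_fst).mem_nhds (Set.mem_preimage.mpr ⟨hd, h0⟩)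
  -- first derivatives agree with the explicit formulas near (l, m)
  have hevl : ∀ j' : Fin n, Dl j' (Fgen f) =ᶠ[𝓝 (l, m)] Gl f j' := by
    intro j'
    refine Filter.eventuallyEq_of_mem hV (fun x hx => ?_)
    obtain ⟨l', m'⟩ := x
    exact Dl_Fgen_eq hf hx.1 hx.2 j'
  have hevm : ∀ j' : Fin n, Dm j' (Fgen f) =ᶠ[𝓝 (l, m)] Gm f j' := by
    intro j'
    refine Filter.eventuallyEq_of_mem hV (fun x hx => ?_)
    obtain ⟨l', m'⟩ := x
    exact Dm_Fgen_eq hf hx.1 hx.2 j'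
  -- values of the first derivatives at (l, m)
  have e1 : Dl i (Fgen f) (l, m) = Gl f i (l, m) := Dl_Fgen_eq hf hd h0 i
  have e2 : Dl j (Fgen f) (l, m) = Gl f j (l, m) := Dl_Fgen_eq hf hd h0 j
  have e3 : Dm i (Fgen f) (l, m) = Gm f i (l, m) := Dm_Fgen_eq hf hd h0 i
  have e4 : Dm j (Fgen f) (l, m) = Gm f j (l, m) := Dm_Fgen_eq hf hd h0 j
  -- second derivatives
  have e5 : Dm i (Dm j (Fgen f)) (l, m) = 0 := by
    show fderiv ℝ (Dm j (Fgen f)) (l, m) ((0 : Fin n → ℝ), Pi.single i 1) = 0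
    rw [(hevm j).fderiv_eq]
    exact (hasPDir_Gm_m hf hd h0 hij).2
  have e6 : Dm i (Dl j (Fgen f)) (l, m) = dcb j i l * gP f i (l, m) := by
    show fderiv ℝ (Dl j (Fgen f)) (l, m) ((0 : Fin n → ℝ), Pi.single i 1)
      = dcb j i l * gP f i (l, m)
    rw [(hevl j).fderiv_eq]
    exact (hasPDir_Gl_m hf hd h0 hij).2
  have e7 : Dm j (Dl i (Fgen f)) (l, m) = dcb i j l * gP f j (l, m) := by
    show fderiv ℝ (Dl i (Fgen f)) (l, m) ((0 : Fin n → ℝ), Pi.single j 1)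
      = dcb i j l * gP f j (l, m)
    rw [(hevl i).fderiv_eq]
    exact (hasPDir_Gl_m hf hd h0 hji).2
  have e8 : Dl i (Dl j (Fgen f)) (l, m)
      = (∑ k, ddc i j k l * f k (l k, m k)) + dcb j i l * hP f i (l, m)
        + dcb i j l * hP f j (l, m) := by
    show fderiv ℝ (Dl j (Fgen f)) (l, m) ((Pi.single i 1 : Fin n → ℝ), (0 : Fin n → ℝ))
      = _
    rw [(hevl j).fderiv_eq]
    exact (hasPDir_Gl_l hf hd h0 hij).2
  -- nonvanishing facts
  have hij' : l i ≠ l j := hd i j hij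
  have hji' : l j ≠ l i := hd j i hji
  have hi0 : l i ≠ 0 := h0 i
  have hj0 : l j ≠ 0 := h0 j
  -- the key pointwise identity
  have key : ∀ k, cf i l * cf j l * ddc i j k l
      = cf j l * dcb j i l * dcb i k l + cf i l * dcb i j l * dcb j k l := by
    intro k
    have hb : bf j i l * bf i j l = -(((l j - l i) ^ 2)⁻¹) := by
      rw [bf, bf]
      have h1 : l i - l j ≠ 0 := sub_ne_zero.mpr hij'
      have h2 : l j - l i ≠ 0 := sub_ne_zero.mpr hji'
      field_simp
      ring
    by_cases hkj : k = j
    · subst hkj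
      simp only [ddc, dcb, if_pos rfl, if_neg hji, if_neg hij, ite_true, if_true]
      linear_combination (-(cf i l * cf k l * cf k l)) * hb
    · by_cases hki : k = i
      · subst hki
        simp only [ddc, dcb, if_pos rfl, if_neg hij, if_neg hji, ite_true, if_true]
        rw [show ((l k - l j) ^ 2 : ℝ) = (l j - l k) ^ 2 by ring]
        linear_combination (-(cf k l * cf k l * cf j l)) * hb
      · have hb2 : bf i k l * bf j k l = bf j i l * bf i k l + bf i j l * bf j k l := by
          rw [bf, bf, bf, bf]
          have h1 : l i - l j ≠ 0 := sub_ne_zero.mpr hij'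
          have h2 : l j - l i ≠ 0 := sub_ne_zero.mpr hji'
          have h3 : l k - l i ≠ 0 := sub_ne_zero.mpr (hd k i hki)
          have h4 : l k - l j ≠ 0 := sub_ne_zero.mpr (hd k j hkj)
          have h5 : l k ≠ 0 := h0 k
          field_simp
          ring
        have hik : ¬(i = k) := fun h => hki h.symm
        simp only [ddc, dcb, if_neg hkj, if_neg hki, if_neg hik, if_neg hij, if_neg hji]
        linear_combination (cf i l * cf j l * cf k l) * hb2
  -- combine the sums
  have e9 : cf i l * (cf j l * (∑ k, ddc i j k l * f k (l k, m k)))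
      = cf j l * (dcb j i l * (∑ k, dcb i k l * f k (l k, m k)))
        + cf i l * (dcb i j l * (∑ k, dcb j k l * f k (l k, m k))) := by
    rw [Finset.mul_sum, Finset.mul_sum, Finset.mul_sum, Finset.mul_sum, Finset.mul_sum,
      Finset.mul_sum, ← Finset.sum_add_distrib]
    refine Finset.sum_congr rfl fun k _ => ?_
    linear_combination (f k (l k, m k)) * key k
  -- final assembly
  rw [LC, e1, e2, e3, e4, e5, e6, e7, e8]
  simp only [Gl, Gm]
  linear_combination (gP f i (l, m) * gP f j (l, m)) * e9

end Main

end
end
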